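/- Every Δ-matroid representable over a finite field of characteristic two is strong. That is, if D = D(M) * X where M is a symmetric matrix over a finite field of characteristic two, D(M) is the Δ-matroid on the index set E of M whose bases are the subsets I with M[I] nonsingular, and * X denotes twisting by a set X (replacing each basis B by B △ X), then D satisfies the strong basis exchange property. -/

import Mathlib

open Matrix
open scoped symmDiff

/-- The principal submatrix of `M` on the index set `I` (with `det (psub M ∅) = 1`). -/
def psub {m : Type*} {K : Type*} (M : Matrix m m K) (I : Finset m) :
    Matrix I I K := fun i j => M i.1 j.1

/-- The strong basis exchange property for a set system `(E, 𝓑)`. -/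
def IsStrongDeltaMatroid {α : Type*} [DecidableEq α] (E : Finset α) (B : Set (Finset α)) : Prop :=
  (B.Nonempty ∧ (∀ b ∈ B, b ⊆ E) ∧
      ∀ b ∈ B, ∀ b' ∈ B, ∀ x ∈ b ∆ b', ∃ y ∈ b ∆ b', b ∆ ({x, y} : Finset α) ∈ B) ∧
    ∀ b ∈ B, ∀ b' ∈ B, ∀ x ∈ b ∆ b', ∃ y ∈ b ∆ b',
      b ∆ ({x, y} : Finset α) ∈ B ∧ b' ∆ ({x, y} : Finset α) ∈ B

/-!
Pivoting a symmetric matrix `M` on a nonsingular principal submatrix `M[I]` gives a matrix `N`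
with `det M[J ∆ I] = det M[I] * det N[J]`; in characteristic two `N` is again symmetric. This
reduces strong exchange between `I` and `I'` to the case `I = ∅`: given `N[C]` nonsingular and
`x ∈ C`, find `y ∈ C` with `N[{x, y}]` and `N[C \ {x, y}]` nonsingular. By Jacobi's identity the
second condition says that `(N[C])⁻¹` has a nonsingular `{x, y}`-minor. For symmetric `S` and
`T = S⁻¹` in characteristic two, `∑ y, (S x x * S y y - S x y ^ 2) * T x y ^ 2 = S x x * T x x + 1`,
because off-diagonal terms of `(T S T) x x` cancel in pairs and squaring is additive. So if
`T x x = 0` some `y` has `det S[{x, y}] ≠ 0` and `T x y ≠ 0`, whence `det T[{x, y}] = T x y ^ 2 ≠ 0`;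
the case `S x x = 0` is symmetric, and otherwise `y = x` works.
-/

open Finset

section DeltaMatroid

variable {α : Type*} [DecidableEq α]

def twist (B : Set (Finset α)) (X : Finset α) : Set (Finset α) :=
  {J | ∃ I ∈ B, J = I ∆ X}

lemma isStrongDeltaMatroid_of_exchange {E : Finset α} {B : Set (Finset α)} (hne : B.Nonempty)
    (hE : ∀ b ∈ B, b ⊆ E)
    (hex : ∀ b ∈ B, ∀ b' ∈ B, ∀ x ∈ b ∆ b', ∃ y ∈ b ∆ b',
      b ∆ ({x, y} : Finset α) ∈ B ∧ b' ∆ ({x, y} : Finset α) ∈ B) :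
    IsStrongDeltaMatroid E B :=
  ⟨⟨hne, hE, fun b hb b' hb' x hx =>
    (hex b hb b' hb' x hx).imp fun _ ⟨hy, h, _⟩ => ⟨hy, h⟩⟩, hex⟩

lemma IsStrongDeltaMatroid.twist {E : Finset α} {B : Set (Finset α)}
    (h : IsStrongDeltaMatroid E B) {X : Finset α} (hX : X ⊆ E) :
    IsStrongDeltaMatroid E (twist B X) := by
  obtain ⟨⟨⟨b₀, hb₀⟩, hE, -⟩, hex⟩ := h
  refine isStrongDeltaMatroid_of_exchange ⟨b₀ ∆ X, b₀, hb₀, rfl⟩ ?_ ?_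
  · rintro _ ⟨b, hb, rfl⟩
    exact symmDiff_le_sup.trans (sup_le (hE b hb) hX)
  · rintro _ ⟨b, hb, rfl⟩ _ ⟨b', hb', rfl⟩ x hx
    have hbb' : b ∆ X ∆ (b' ∆ X) = b ∆ b' := by
      rw [symmDiff_symmDiff_symmDiff_comm, symmDiff_self, symmDiff_bot]
    rw [hbb'] at hx ⊢
    obtain ⟨y, hy, h, h'⟩ := hex b hb b' hb' x hx
    exact ⟨y, hy, ⟨_, h, symmDiff_right_comm _ _ _⟩, ⟨_, h', symmDiff_right_comm _ _ _⟩⟩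

end DeltaMatroid

lemma CharTwo.sum_sum_eq_sum_diag_of_symm {ι R : Type*} [Fintype ι] [DecidableEq ι] [Ring R] [CharP R 2]
    (f : ι → ι → R) (hf : ∀ y z, f y z = f z y) : ∑ y, ∑ z, f y z = ∑ y, f y y := by
  rw [← sum_product', ← diag_union_offDiag, sum_union (disjoint_diag_offDiag _), sum_diag,
    add_eq_left]
  refine sum_involution (fun p _ => p.swap) (fun p _ => ?_) (fun p hp _ => ?_)
    (fun p hp => mem_offDiag.2 ?_) (fun p _ => rfl)
  · rw [Prod.fst_swap, Prod.snd_swap, hf p.2, CharTwo.add_self_eq_zero]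
  · exact fun h => (mem_offDiag.1 hp).2.2 (congrArg Prod.fst h).symm
  · obtain ⟨h1, h2, h3⟩ := mem_offDiag.1 hp
    exact ⟨h2, h1, Ne.symm h3⟩

section Minors

variable {m : Type*} [DecidableEq m] {K : Type*} [Field K]

lemma det_psub_singleton (M : Matrix m m K) (x : m) : (psub M {x}).det = M x x := by
  let _ : Unique (↥({x} : Finset m)) :=
    ⟨⟨⟨x, mem_singleton_self x⟩⟩, fun z => Subtype.ext (mem_singleton.1 z.2)⟩
  exact det_unique _

lemma det_psub_pair (M : Matrix m m K) {x y : m} (hxy : x ≠ y) :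
    (psub M {x, y}).det = M x x * M y y - M x y * M y x := by
  have hx : x ∈ ({x, y} : Finset m) := by simp
  have hy : y ∈ ({x, y} : Finset m) := by simp
  let e : Fin 2 ≃ ↥({x, y} : Finset m) :=
    { toFun := ![⟨x, hx⟩, ⟨y, hy⟩]
      invFun := fun z => if z.1 = x then 0 else 1
      left_inv := fun i => by fin_cases i <;> simp [hxy.symm]
      right_inv := by
        rintro ⟨z, hz⟩
        rcases mem_insert.1 hz with rfl | hz
        · simp
        · obtain rfl := mem_singleton.1 hz
          simp [hxy.symm] }
  rw [← det_submatrix_equiv_self e, det_fin_two]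
  simp [e, psub]

lemma det_psub_psub_subtype (M : Matrix m m K) {C J : Finset m} (hJ : J ⊆ C) :
    (psub (psub M C) (J.subtype (· ∈ C))).det = (psub M J).det := by
  let e : ↥J ≃ ↥(J.subtype (· ∈ C)) :=
    { toFun := fun a => ⟨⟨a, hJ a.2⟩, mem_subtype.2 a.2⟩
      invFun := fun z => ⟨z.1.1, mem_subtype.1 z.2⟩
      left_inv := fun _ => rfl
      right_inv := fun _ => rfl }
  rw [← det_submatrix_equiv_self e]
  rfl

def nonsingularSets (M : Matrix m m K) : Set (Finset m) :=
  {I | (psub M I).det ≠ 0}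

end Minors

section Pivot

variable {m : Type*} [Fintype m] [DecidableEq m] {K : Type*} [Field K]

def selectCols (M : Matrix m m K) (J : Finset m) : Matrix m m K :=
  fun i j => if j ∈ J then M i j else (1 : Matrix m m K) i j

lemma det_selectCols (M : Matrix m m K) (J : Finset m) :
    (selectCols M J).det = (psub M J).det := by
  have hlower : ∀ i ∈ J, ∀ j ∉ J, selectCols M J i j = 0 := fun i hi j hj => by
    simp [selectCols, hj, one_apply, show i ≠ j by rintro rfl; exact hj hi]
  have hone : toSquareBlockProp (selectCols M J) (· ∉ J) = 1 := by
    ext i j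
    simp [toSquareBlockProp, toBlock, selectCols, j.2, one_apply, Subtype.ext_iff]
  have hblock : toSquareBlockProp (selectCols M J) (· ∈ J) = psub M J := by
    ext i j
    simp [toSquareBlockProp, toBlock, selectCols, psub, j.2]
  rw [twoBlockTriangular_det' _ (· ∈ J) hlower, hone, hblock, det_one, mul_one]
  -- the two determinants differ only in the `Fintype` instance on `↥J`
  convert rfl

lemma mul_selectCols_apply (A N : Matrix m m K) (J : Finset m) (i j : m) :
    (A * selectCols N J) i j = if j ∈ J then (A * N) i j else A i j := by
  by_cases hj : j ∈ J <;> simp [mul_apply, selectCols, hj, one_apply]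

lemma mul_selectCols_inv (A : Matrix m m K) (hA : IsUnit A.det) (P : Finset m) :
    A * selectCols A⁻¹ P = selectCols A Pᶜ := by
  ext i j
  by_cases hj : j ∈ P <;> simp [mul_selectCols_apply, selectCols, hj, mul_nonsing_inv _ hA]

/-- Jacobi's complementary minor identity, for principal minors. -/
lemma det_mul_det_psub_inv (A : Matrix m m K) (hA : IsUnit A.det) (P : Finset m) :
    A.det * (psub A⁻¹ P).det = (psub A Pᶜ).det := by
  rw [← det_selectCols, ← det_selectCols, ← det_mul, mul_selectCols_inv A hA]

noncomputable def pivot (M : Matrix m m K) (I : Finset m) : Matrix m m K :=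
  (selectCols M I)⁻¹ * selectCols M Iᶜ

lemma selectCols_mul_selectCols_pivot (M : Matrix m m K) {I : Finset m}
    (hI : (psub M I).det ≠ 0) (J : Finset m) :
    selectCols M I * selectCols (pivot M I) J = selectCols M (J ∆ I) := by
  have hP : IsUnit (selectCols M I).det := by rw [det_selectCols]; exact hI.isUnit
  ext i j
  rw [mul_selectCols_apply, pivot, mul_nonsing_inv_cancel_left _ _ hP]
  by_cases hj : j ∈ J <;> by_cases hj' : j ∈ I <;>
    simp [selectCols, mem_symmDiff, hj, hj']

lemma det_psub_symmDiff (M : Matrix m m K) {I : Finset m} (hI : (psub M I).det ≠ 0)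
    (J : Finset m) : (psub M (J ∆ I)).det = (psub M I).det * (psub (pivot M I) J).det := by
  rw [← det_selectCols, ← det_selectCols, ← det_selectCols, ← det_mul,
    selectCols_mul_selectCols_pivot M hI]

lemma det_psub_symmDiff_ne_zero_iff (M : Matrix m m K) {I : Finset m}
    (hI : (psub M I).det ≠ 0) (J : Finset m) :
    (psub M (J ∆ I)).det ≠ 0 ↔ (psub (pivot M I) J).det ≠ 0 := by
  rw [det_psub_symmDiff M hI, mul_ne_zero_iff, and_iff_right hI]

lemma selectCols_mul_transpose_selectCols_compl_apply (M : Matrix m m K) (I : Finset m)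
    (i j : m) : (selectCols M I * (selectCols M Iᶜ)ᵀ) i j
      = (if j ∈ I then M i j else 0) + (if i ∈ I then 0 else M j i) := by
  have hterm : ∀ k, selectCols M I i k * selectCols M Iᶜ j k =
      (if j = k then (if k ∈ I then M i k else 0) else 0) +
        (if i = k then (if k ∈ I then 0 else M j k) else 0) := fun k => by
    by_cases hk : k ∈ I
    · by_cases hjk : j = k <;> simp [selectCols, one_apply, hk, hjk]
    · by_cases hik : i = k <;> simp [selectCols, one_apply, hk, hik, mul_comm]
  simp only [mul_apply, transpose_apply, hterm, sum_add_distrib, sum_ite_eq, mem_univ, if_true]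

variable [CharP K 2]

lemma selectCols_mul_transpose_comm {M : Matrix m m K} (hM : M.IsSymm) (I : Finset m) :
    selectCols M I * (selectCols M Iᶜ)ᵀ = selectCols M Iᶜ * (selectCols M I)ᵀ := by
  ext i j
  have h := selectCols_mul_transpose_selectCols_compl_apply M Iᶜ i j
  rw [compl_compl] at h
  rw [selectCols_mul_transpose_selectCols_compl_apply, h, hM.apply i j]
  by_cases hi : i ∈ I <;> by_cases hj : j ∈ I <;> simp [hi, hj, CharTwo.add_self_eq_zero]

lemma isSymm_pivot {M : Matrix m m K} (hM : M.IsSymm) {I : Finset m}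
    (hI : (psub M I).det ≠ 0) : (pivot M I).IsSymm := by
  set P := selectCols M I
  set Q := selectCols M Iᶜ
  have hP : IsUnit P.det := by rw [det_selectCols]; exact hI.isUnit
  have hPT : IsUnit Pᵀ.det := by rwa [det_transpose]
  calc (P⁻¹ * Q)ᵀ = P⁻¹ * (P * Qᵀ) * Pᵀ⁻¹ := by
        rw [transpose_mul, transpose_nonsing_inv, nonsing_inv_mul_cancel_left _ _ hP]
    _ = P⁻¹ * Q := by
        rw [selectCols_mul_transpose_comm hM, Matrix.mul_assoc, Matrix.mul_assoc,
          mul_nonsing_inv _ hPT, Matrix.mul_one]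

end Pivot

section StrongExchange

variable {m : Type*} [DecidableEq m] {K : Type*} [Field K] [CharP K 2]

section

variable [Fintype m] {S T : Matrix m m K}

lemma sum_det_pair_mul_sq (hS : S.IsSymm) (hT : T.IsSymm) (hST : S * T = 1) (x : m) :
    ∑ y, (S x x * S y y - S x y ^ 2) * T x y ^ 2 = S x x * T x x + 1 := by
  have hTS : T * S = 1 := mul_eq_one_comm.mp hST
  have hdiag : ∑ y, S y y * T x y ^ 2 = T x x := by
    calc ∑ y, S y y * T x y ^ 2 = ∑ y, ∑ z, T x y * S y z * T z x := by
          rw [CharTwo.sum_sum_eq_sum_diag_of_symm _ fun y z => by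
            rw [hS.apply y z, hT.apply x y, hT.apply x z]; ring]
          refine sum_congr rfl fun y _ => ?_
          rw [hT.apply x y]; ring
      _ = (T * S * T) x x := by simp only [mul_apply, sum_mul]; exact sum_comm
      _ = T x x := by rw [hTS, Matrix.one_mul]
  have hoff : ∑ y, S x y ^ 2 * T x y ^ 2 = 1 := by
    calc ∑ y, S x y ^ 2 * T x y ^ 2 = (∑ y, S x y * T y x) ^ 2 := by
          rw [sum_pow_char]
          refine sum_congr rfl fun y _ => ?_
          rw [hT.apply x y]; ring
      _ = 1 := by rw [← mul_apply, hST, one_apply_eq, one_pow]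
  simp only [CharTwo.sub_eq_add, add_mul, sum_add_distrib, mul_assoc, ← mul_sum, hdiag, hoff]

lemma exists_det_psub_pair_ne_zero_of_apply_eq_zero (hS : S.IsSymm) (hT : T.IsSymm)
    (hST : S * T = 1) {x : m} (hTx : T x x = 0) :
    ∃ y, (psub S {x, y}).det ≠ 0 ∧ (psub T {x, y}).det ≠ 0 := by
  have hsum : ∑ y, (S x x * S y y - S x y ^ 2) * T x y ^ 2 ≠ 0 := by
    rw [sum_det_pair_mul_sq hS hT hST, hTx, mul_zero, zero_add]
    exact one_ne_zero
  obtain ⟨y, -, hy⟩ := exists_ne_zero_of_sum_ne_zero hsum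
  have hxy : x ≠ y := by rintro rfl; apply hy; ring
  refine ⟨y, ?_, ?_⟩
  · rw [det_psub_pair S hxy, hS.apply x y, ← sq]
    exact left_ne_zero_of_mul hy
  · rw [det_psub_pair T hxy, hTx, zero_mul, zero_sub, neg_ne_zero, hT.apply x y, ← sq]
    exact right_ne_zero_of_mul hy

lemma exists_det_psub_pair_ne_zero (hS : S.IsSymm) (hT : T.IsSymm) (hST : S * T = 1) (x : m) :
    ∃ y, (psub S {x, y}).det ≠ 0 ∧ (psub T {x, y}).det ≠ 0 := by
  by_cases hTx : T x x = 0
  · exact exists_det_psub_pair_ne_zero_of_apply_eq_zero hS hT hST hTx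
  by_cases hSx : S x x = 0
  · obtain ⟨y, hy⟩ :=
      exists_det_psub_pair_ne_zero_of_apply_eq_zero hT hS (mul_eq_one_comm.mp hST) hSx
    exact ⟨y, hy.symm⟩
  refine ⟨x, ?_⟩
  rw [pair_eq_singleton, det_psub_singleton, det_psub_singleton]
  exact ⟨hSx, hTx⟩

end

lemma exists_mem_det_psub_pair_ne_zero_and_sdiff {N : Matrix m m K} (hN : N.IsSymm)
    {C : Finset m} (hC : (psub N C).det ≠ 0) {x : m} (hx : x ∈ C) :
    ∃ y ∈ C, (psub N {x, y}).det ≠ 0 ∧ (psub N (C \ {x, y})).det ≠ 0 := by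
  set S := psub N C
  have hS : S.IsSymm := hN.submatrix _
  obtain ⟨y, hSxy, hTxy⟩ :=
    exists_det_psub_pair_ne_zero hS hS.inv (mul_nonsing_inv S hC.isUnit) ⟨x, hx⟩
  have hpair : ({⟨x, hx⟩, y} : Finset C) = ({x, y.1} : Finset m).subtype (· ∈ C) := by
    ext ⟨z, hz⟩
    simp only [mem_insert, mem_singleton, mem_subtype, Subtype.mk.injEq]
    rw [← Subtype.val_inj]
  have hcompl : ({⟨x, hx⟩, y} : Finset C)ᶜ = (C \ {x, y.1}).subtype (· ∈ C) := by
    ext ⟨z, hz⟩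
    simp only [mem_compl, mem_insert, mem_singleton, mem_subtype, mem_sdiff, Subtype.mk.injEq,
      hz, true_and]
    rw [← Subtype.val_inj]
  refine ⟨y, y.2, ?_, ?_⟩
  · rwa [← det_psub_psub_subtype N (insert_subset hx (singleton_subset_iff.2 y.2)), ← hpair]
  · rw [← det_psub_psub_subtype N sdiff_subset, ← hcompl, ← det_mul_det_psub_inv S hC.isUnit]
    exact mul_ne_zero hC hTxy

variable [Fintype m]

lemma exists_symmDiff_pair_mem_nonsingularSets {M : Matrix m m K} (hM : M.IsSymm)
    {I I' : Finset m} (hI : I ∈ nonsingularSets M) (hI' : I' ∈ nonsingularSets M)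
    {x : m} (hx : x ∈ I ∆ I') :
    ∃ y ∈ I ∆ I', I ∆ {x, y} ∈ nonsingularSets M ∧ I' ∆ {x, y} ∈ nonsingularSets M := by
  have hC : (psub (pivot M I) (I ∆ I')).det ≠ 0 := by
    rwa [← det_psub_symmDiff_ne_zero_iff M hI, symmDiff_comm I, symmDiff_symmDiff_cancel_right]
  obtain ⟨y, hy, hpair, hsdiff⟩ :=
    exists_mem_det_psub_pair_ne_zero_and_sdiff (isSymm_pivot hM hI) hC hx
  refine ⟨y, hy, ?_, ?_⟩
  · rwa [← det_psub_symmDiff_ne_zero_iff M hI, symmDiff_comm] at hpair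
  · rwa [← symmDiff_of_ge (insert_subset hx (singleton_subset_iff.2 hy)),
      ← det_psub_symmDiff_ne_zero_iff M hI, symmDiff_right_comm, symmDiff_comm I,
      symmDiff_symmDiff_cancel_right] at hsdiff

lemma isStrongDeltaMatroid_nonsingularSets {M : Matrix m m K} (hM : M.IsSymm) :
    IsStrongDeltaMatroid univ (nonsingularSets M) :=
  isStrongDeltaMatroid_of_exchange ⟨∅, by simp [nonsingularSets, det_isEmpty]⟩
    (fun b _ => subset_univ b)
    (fun _ hb _ hb' _ hx => exists_symmDiff_pair_mem_nonsingularSets hM hb hb' hx)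

end StrongExchange

theorem stmt8_general {n : ℕ} {K : Type*} [Field K] [CharP K 2]
    (M : Matrix (Fin n) (Fin n) K) (hM : Mᵀ = M) (X : Finset (Fin n)) :
    IsStrongDeltaMatroid (Finset.univ : Finset (Fin n))
      {J : Finset (Fin n) | ∃ I : Finset (Fin n), (psub M I).det ≠ 0 ∧ J = I ∆ X} :=
  (isStrongDeltaMatroid_nonsingularSets hM).twist (subset_univ X)

/-- every Δ-matroid representable over a finite field of characteristic
two — i.e. of the form `D(M) * X` with `M` symmetric — is strong. -/
theorem stmt8 {n : ℕ} {K : Type*} [Field K] [Fintype K] [CharP K 2]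
    (M : Matrix (Fin n) (Fin n) K) (hM : Mᵀ = M) (X : Finset (Fin n)) :
    IsStrongDeltaMatroid (Finset.univ : Finset (Fin n))
      {J : Finset (Fin n) | ∃ I : Finset (Fin n), (psub M I).det ≠ 0 ∧ J = I ∆ X} :=
  stmt8_general M hM X
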